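/- Let α > 0 and 0 ≤ μ < 1 with μ ≤ α, and let ψ ∈ C¹([a,b]) be increasing with ψ' ≠ 0. Then the ψ-fractional integral I_{a+}^{α;ψ} maps the weighted space C_{μ;ψ}[a,b] boundedly into C[a,b]. -/

import Mathlib

/-!
The substitutions `u = ψ t` and then `u = ψ a + (ψ x - ψ a) r` turn `I^{α;ψ} f (x)` into
`(ψ x - ψ a)^(α-μ) / Γ(α)` times `∫₀¹ r^(-μ) (1-r)^(α-1) W(ψ a + (ψ x - ψ a) r) dr`, where
`W = ((ψ - ψ a)^μ f) ∘ ψ⁻¹` is continuous and bounded by `‖f‖_{C_{μ;ψ}}`. The Beta kernel is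
integrable because `μ < 1` and `α > 0`, so dominated convergence gives continuity in `x`, and
since `α - μ ≥ 0` the bound is `‖f‖ (ψ b - ψ a)^(α-μ) B(1-μ, α) / Γ(α)`.
-/

open MeasureTheory Real Set

noncomputable def psiInt (a α : ℝ) (ψ f : ℝ → ℝ) (x : ℝ) : ℝ :=
  (1 / Real.Gamma α) * ∫ t in a..x, deriv ψ t * (ψ x - ψ t) ^ (α - 1) * f t

theorem intervalIntegrable_rpow_mul_one_sub_rpow {p q : ℝ} (hp : -1 < p) (hq : -1 < q) :
    IntervalIntegrable (fun r : ℝ => r ^ p * (1 - r) ^ q) volume 0 1 := by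
  have h₁ : IntervalIntegrable (fun r : ℝ => r ^ p * (1 - r) ^ q) volume 0 (1 / 2) := by
    refine (intervalIntegral.intervalIntegrable_rpow' hp).mul_continuousOn
      (ContinuousOn.rpow_const (by fun_prop) fun r hr => Or.inl ?_)
    rw [uIcc_of_le (by norm_num)] at hr
    linarith [hr.2]
  have h₂ : IntervalIntegrable (fun r : ℝ => r ^ p * (1 - r) ^ q) volume (1 / 2) 1 := by
    have := (intervalIntegral.intervalIntegrable_rpow' (a := 1 / 2) (b := 0) hq).comp_sub_left 1
    rw [sub_zero, sub_half] at this
    refine this.continuousOn_mul (g := fun r => r ^ p)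
      (ContinuousOn.rpow_const continuousOn_id fun r hr => Or.inl ?_)
    rw [uIcc_of_le (by norm_num)] at hr
    linarith [hr.1]
  exact h₁.trans h₂

theorem continuous_integral_mul_comp_add_mul {k W : ℝ → ℝ} {K : ℝ}
    (hk : IntervalIntegrable k volume 0 1) (hW : Continuous W) (hWK : ∀ u, |W u| ≤ K) (A : ℝ) :
    Continuous fun s => ∫ r in (0:ℝ)..1, k r * W (A + s * r) := by
  refine intervalIntegral.continuous_of_dominated_interval (bound := fun r => |k r| * K)
    (fun s => hk.def'.aestronglyMeasurable.mul (by fun_prop : Continuous _).aestronglyMeasurable)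
    (fun s => Filter.Eventually.of_forall fun r _ => ?_) (hk.abs.mul_const K)
    (Filter.Eventually.of_forall fun r _ => by fun_prop)
  rw [norm_mul, Real.norm_eq_abs, Real.norm_eq_abs]
  exact mul_le_mul_of_nonneg_left (hWK _) (abs_nonneg _)

theorem abs_integral_mul_comp_le {k W g : ℝ → ℝ} {K : ℝ} (hk : IntervalIntegrable k volume 0 1)
    (hk0 : ∀ r ∈ Icc (0:ℝ) 1, 0 ≤ k r) (hWK : ∀ u, |W u| ≤ K) :
    |∫ r in (0:ℝ)..1, k r * W (g r)| ≤ K * ∫ r in (0:ℝ)..1, k r := by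
  rw [← Real.norm_eq_abs, ← intervalIntegral.integral_const_mul]
  refine intervalIntegral.norm_integral_le_of_norm_le zero_le_one
    (Filter.Eventually.of_forall fun r hr => ?_) (hk.const_mul K)
  have hkr := hk0 r (Ioc_subset_Icc_self hr)
  rw [norm_mul, Real.norm_of_nonneg hkr, Real.norm_eq_abs, mul_comm]
  exact mul_le_mul_of_nonneg_right (hWK _) hkr

theorem StrictMonoOn.exists_continuous_inverse {a b : ℝ} {ψ : ℝ → ℝ} (hab : a ≤ b)
    (hψ : ContinuousOn ψ (Icc a b)) (hmono : StrictMonoOn ψ (Icc a b)) :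
    ∃ φ : ℝ → ℝ, Continuous φ ∧ (∀ u, φ u ∈ Icc a b) ∧ LeftInvOn φ ψ (Icc a b) ∧
      RightInvOn φ ψ (Icc (ψ a) (ψ b)) := by
  have hmaps : MapsTo ψ (Icc a b) (Icc (ψ a) (ψ b)) := fun t ht =>
    ⟨hmono.monotoneOn (left_mem_Icc.2 hab) ht ht.1, hmono.monotoneOn ht (right_mem_Icc.2 hab) ht.2⟩
  have hsurj : Function.Surjective hmaps.restrict := by
    rintro ⟨u, hu⟩
    obtain ⟨t, ht, rfl⟩ := intermediate_value_Icc hab hψ hu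
    exact ⟨⟨t, ht⟩, rfl⟩
  -- An order isomorphism between intervals is a homeomorphism; `projIcc` extends its inverse to `ℝ`.
  let e := StrictMono.orderIsoOfSurjective hmaps.restrict (fun s t h => hmono s.2 t.2 h) hsurj
  have hψab : ψ a ≤ ψ b := (hmaps (left_mem_Icc.2 hab)).2
  refine ⟨fun u => e.symm (projIcc (ψ a) (ψ b) hψab u),
    continuous_subtype_val.comp (e.symm.continuous.comp continuous_projIcc),
    fun u => (e.symm _).2, fun t ht => ?_, fun u hu => ?_⟩
  · have : projIcc (ψ a) (ψ b) hψab (ψ t) = e ⟨t, ht⟩ := projIcc_of_mem hψab (hmaps ht)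
    simp only [this, OrderIso.symm_apply_apply]
  · show ψ (e.symm (projIcc _ _ hψab u)) = u
    rw [projIcc_of_mem hψab hu]
    exact congrArg Subtype.val (e.apply_symm_apply ⟨u, hu⟩)

theorem integral_deriv_mul_comp_of_monotoneOn {a x : ℝ} {ψ : ℝ → ℝ} (hax : a ≤ x)
    (hψ : DifferentiableOn ℝ ψ (Icc a x)) (hmono : MonotoneOn ψ (Icc a x)) (g : ℝ → ℝ) :
    ∫ t in a..x, deriv ψ t * g (ψ t) = ∫ u in ψ a..ψ x, g u := by
  have hnhds : ∀ t ∈ Ioo (min a x) (max a x), Icc a x ∈ nhds t := fun t ht => by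
    rw [min_eq_left hax, max_eq_right hax] at ht
    exact Icc_mem_nhds ht.1 ht.2
  have hcont : ContinuousOn ψ (uIcc a x) := by rw [uIcc_of_le hax]; exact hψ.continuousOn
  rw [← intervalIntegral.integral_comp_mul_deriv_of_deriv_nonneg (g := g) hcont
    (fun t ht => ((hψ t (mem_of_mem_nhds (hnhds t ht))).differentiableAt
      (hnhds t ht)).hasDerivAt)
    fun t ht => by
      rw [← derivWithin_of_mem_nhds (hnhds t ht)]
      exact hmono.derivWithin_nonneg]
  simp only [Function.comp_apply, mul_comm]

theorem integral_rpow_sub_mul_eq_rpow_mul_integral {A X α μ : ℝ} {F W : ℝ → ℝ} (hAX : A < X)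
    (hFW : ∀ u ∈ Ioc A X, (u - A) ^ μ * F u = W u) :
    ∫ u in A..X, (X - u) ^ (α - 1) * F u =
      (X - A) ^ (α - μ) * ∫ r in (0:ℝ)..1, r ^ (-μ) * (1 - r) ^ (α - 1) * W (A + (X - A) * r) := by
  have hs : 0 < X - A := sub_pos.2 hAX
  have hsub := intervalIntegral.integral_comp_add_mul (f := fun u => (X - u) ^ (α - 1) * F u)
    (a := 0) (b := 1) hs.ne' A
  rw [mul_zero, add_zero, mul_one, add_sub_cancel] at hsub
  have hpoint : ∀ r ∈ Ioc (0:ℝ) 1,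
      (X - A) * ((X - (A + (X - A) * r)) ^ (α - 1) * F (A + (X - A) * r)) =
        (X - A) ^ (α - μ) * (r ^ (-μ) * (1 - r) ^ (α - 1) * W (A + (X - A) * r)) := by
    intro r ⟨hr0, hr1⟩
    have hu : A + (X - A) * r ∈ Ioc A X := ⟨by nlinarith, by nlinarith⟩
    have hF : F (A + (X - A) * r) = ((X - A) * r) ^ (-μ) * W (A + (X - A) * r) := by
      rw [← hFW _ hu, add_sub_cancel_left, ← mul_assoc, ← rpow_add (by positivity),
        neg_add_cancel, rpow_zero, one_mul]
    rw [hF, show X - (A + (X - A) * r) = (X - A) * (1 - r) by ring,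
      mul_rpow hs.le (by linarith), mul_rpow hs.le hr0.le,
      show α - μ = 1 + (α - 1) + -μ by ring, rpow_add hs, rpow_add hs, rpow_one]
    ring
  calc ∫ u in A..X, (X - u) ^ (α - 1) * F u
      = (X - A) * ∫ r in (0:ℝ)..1, (X - (A + (X - A) * r)) ^ (α - 1) * F (A + (X - A) * r) := by
        rw [hsub, smul_eq_mul, mul_inv_cancel_left₀ hs.ne']
    _ = ∫ r in (0:ℝ)..1,
          (X - A) ^ (α - μ) * (r ^ (-μ) * (1 - r) ^ (α - 1) * W (A + (X - A) * r)) := by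
        rw [← intervalIntegral.integral_const_mul]
        refine intervalIntegral.integral_congr_ae
          (Filter.Eventually.of_forall fun r hr => hpoint r ?_)
        rwa [uIoc_of_le zero_le_one] at hr
    _ = _ := intervalIntegral.integral_const_mul _ _

theorem psiInt_eq_mul_integral {a b α μ x : ℝ} {ψ φ f W : ℝ → ℝ} (hα : 0 < α) (hμα : μ ≤ α)
    (hψ : DifferentiableOn ℝ ψ (Icc a b)) (hmono : StrictMonoOn ψ (Icc a b))
    (hφ : LeftInvOn φ ψ (Icc a b)) (hW : ∀ u ∈ Icc (ψ a) (ψ b), W u = (u - ψ a) ^ μ * f (φ u))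
    (hx : x ∈ Icc a b) :
    psiInt a α ψ f x = 1 / Gamma α * ((ψ x - ψ a) ^ (α - μ) *
      ∫ r in (0:ℝ)..1, r ^ (-μ) * (1 - r) ^ (α - 1) * W (ψ a + (ψ x - ψ a) * r)) := by
  have ha : a ∈ Icc a b := ⟨le_rfl, hx.1.trans hx.2⟩
  have hb : b ∈ Icc a b := ⟨hx.1.trans hx.2, le_rfl⟩
  have hψxb : ψ x ≤ ψ b := hmono.monotoneOn hx hb hx.2
  rcases hx.1.eq_or_lt with rfl | hax
  · -- At `x = a` the right side vanishes through `0 ^ (α - μ)`, or, when `μ = α`, through `W (ψ a)`.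
    rcases hμα.lt_or_eq with hμα | rfl
    · simp [psiInt, zero_rpow (sub_pos.2 hμα).ne']
    · simp only [sub_self, zero_mul, add_zero]
      rw [hW _ (left_mem_Icc.2 hψxb), sub_self, zero_rpow hα.ne']
      simp [psiInt]
  have hsub : Icc a x ⊆ Icc a b := Icc_subset_Icc_right hx.2
  unfold psiInt
  congr 1
  calc ∫ t in a..x, deriv ψ t * (ψ x - ψ t) ^ (α - 1) * f t
      = ∫ t in a..x, deriv ψ t * ((ψ x - ψ t) ^ (α - 1) * f (φ (ψ t))) := by
        refine intervalIntegral.integral_congr fun t ht => ?_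
        rw [uIcc_of_le hax.le] at ht
        simp only [hφ (hsub ht), mul_assoc]
    _ = ∫ u in ψ a..ψ x, (ψ x - u) ^ (α - 1) * f (φ u) :=
        integral_deriv_mul_comp_of_monotoneOn (g := fun u => (ψ x - u) ^ (α - 1) * f (φ u))
          hax.le (hψ.mono hsub) (hmono.monotoneOn.mono hsub)
    _ = _ := integral_rpow_sub_mul_eq_rpow_mul_integral (hmono ha hx hax)
        fun u hu => (hW u ⟨hu.1.le, hu.2.trans hψxb⟩).symm

theorem continuousOn_rpow_mul_integral {a b α μ K : ℝ} {ψ k W : ℝ → ℝ}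
    (hψ : ContinuousOn ψ (Icc a b)) (hk : IntervalIntegrable k volume 0 1) (hW : Continuous W)
    (hWK : ∀ u, |W u| ≤ K) (hμα : μ ≤ α) :
    ContinuousOn (fun x => (ψ x - ψ a) ^ (α - μ) *
      ∫ r in (0:ℝ)..1, k r * W (ψ a + (ψ x - ψ a) * r)) (Icc a b) := by
  have hψa : ContinuousOn (fun x => ψ x - ψ a) (Icc a b) := hψ.sub continuousOn_const
  exact (hψa.rpow_const fun _ _ => Or.inr (sub_nonneg.2 hμα)).mul
    ((continuous_integral_mul_comp_add_mul hk hW hWK (ψ a)).comp_continuousOn hψa)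

theorem abs_rpow_mul_integral_le {a b α μ K x : ℝ} {ψ k W : ℝ → ℝ}
    (hmono : MonotoneOn ψ (Icc a b)) (hx : x ∈ Icc a b) (hk : IntervalIntegrable k volume 0 1)
    (hk0 : ∀ r ∈ Icc (0:ℝ) 1, 0 ≤ k r) (hWK : ∀ u, |W u| ≤ K) (hμα : μ ≤ α) :
    |(ψ x - ψ a) ^ (α - μ) * ∫ r in (0:ℝ)..1, k r * W (ψ a + (ψ x - ψ a) * r)| ≤
      (ψ b - ψ a) ^ (α - μ) * (∫ r in (0:ℝ)..1, k r) * K := by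
  have ha : a ∈ Icc a b := ⟨le_rfl, hx.1.trans hx.2⟩
  have hb : b ∈ Icc a b := ⟨hx.1.trans hx.2, le_rfl⟩
  have hxa : 0 ≤ ψ x - ψ a := sub_nonneg.2 (hmono ha hx hx.1)
  have hxb : ψ x - ψ a ≤ ψ b - ψ a := sub_le_sub_right (hmono hx hb hx.2) _
  rw [abs_mul, abs_of_nonneg (rpow_nonneg hxa _), mul_assoc, mul_comm _ K]
  exact mul_le_mul (rpow_le_rpow hxa hxb (sub_nonneg.2 hμα))
    (abs_integral_mul_comp_le hk hk0 hWK) (abs_nonneg _) (rpow_nonneg (hxa.trans hxb) _)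

theorem stmt9_general (a b α μ : ℝ) (ψ : ℝ → ℝ) (hab : a < b) (hα : 0 < α)
    (hμ1 : μ < 1) (hμα : μ ≤ α)
    (hψ : ContDiffOn ℝ 1 ψ (Set.Icc a b)) (hmono : StrictMonoOn ψ (Set.Icc a b)) :
    ∃ C : ℝ, 0 ≤ C ∧ ∀ f : ℝ → ℝ,
      ContinuousOn (fun t => (ψ t - ψ a) ^ μ * f t) (Set.Icc a b) →
      (ContinuousOn (psiInt a α ψ f) (Set.Icc a b) ∧
        ∀ K : ℝ, (∀ t ∈ Set.Icc a b, |(ψ t - ψ a) ^ μ * f t| ≤ K) →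
          ∀ x ∈ Set.Icc a b, |psiInt a α ψ f x| ≤ C * K) := by
  obtain ⟨φ, hφc, hφmem, hφψ, hψφ⟩ := hmono.exists_continuous_inverse hab.le hψ.continuousOn
  have hk := intervalIntegrable_rpow_mul_one_sub_rpow (p := -μ) (q := α - 1)
    (by linarith) (by linarith)
  have hk0 : ∀ r ∈ Icc (0:ℝ) 1, 0 ≤ r ^ (-μ) * (1 - r) ^ (α - 1) := fun r hr =>
    mul_nonneg (rpow_nonneg hr.1 _) (rpow_nonneg (sub_nonneg.2 hr.2) _)
  have hΓ := Gamma_pos_of_pos hα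
  have hψb := hmono.monotoneOn (left_mem_Icc.2 hab.le) (right_mem_Icc.2 hab.le) hab.le
  refine ⟨1 / Gamma α * ((ψ b - ψ a) ^ (α - μ) * ∫ r in (0:ℝ)..1, r ^ (-μ) * (1 - r) ^ (α - 1)),
    ?_, fun f hf => ?_⟩
  · have := intervalIntegral.integral_nonneg (μ := volume) zero_le_one hk0
    have := sub_nonneg.2 hψb
    positivity
  set W := fun u => (ψ (φ u) - ψ a) ^ μ * f (φ u)
  have hEq : EqOn (psiInt a α ψ f) (fun x => 1 / Gamma α * ((ψ x - ψ a) ^ (α - μ) *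
      ∫ r in (0:ℝ)..1, r ^ (-μ) * (1 - r) ^ (α - 1) * W (ψ a + (ψ x - ψ a) * r))) (Icc a b) :=
    fun x hx => psiInt_eq_mul_integral hα hμα (hψ.differentiableOn one_ne_zero) hmono hφψ
      (fun u hu => by simp only [W, hψφ hu]) hx
  refine ⟨?_, fun K hK x hx => ?_⟩
  · obtain ⟨K, hK⟩ := isCompact_Icc.exists_bound_of_continuousOn hf
    exact (continuousOn_const.mul (continuousOn_rpow_mul_integral hψ.continuousOn hk
      (hf.comp_continuous hφc hφmem) (fun u => hK _ (hφmem u)) hμα)).congr hEq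
  · rw [hEq hx, abs_mul, abs_of_pos (by positivity), mul_assoc]
    gcongr 1 / Gamma α * ?_
    exact abs_rpow_mul_integral_le hmono.monotoneOn hx hk hk0 (fun u => hK _ (hφmem u)) hμα

theorem stmt9 (a b α μ : ℝ) (ψ : ℝ → ℝ) (hab : a < b) (hα : 0 < α)
    (hμ0 : 0 ≤ μ) (hμ1 : μ < 1) (hμα : μ ≤ α)
    (hψ : ContDiffOn ℝ 1 ψ (Set.Icc a b)) (hmono : StrictMonoOn ψ (Set.Icc a b))
    (hψ' : ∀ x ∈ Set.Icc a b, deriv ψ x ≠ 0) :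
    ∃ C : ℝ, 0 ≤ C ∧ ∀ f : ℝ → ℝ,
      ContinuousOn (fun t => (ψ t - ψ a) ^ μ * f t) (Set.Icc a b) →
      (ContinuousOn (psiInt a α ψ f) (Set.Icc a b) ∧
        ∀ K : ℝ, (∀ t ∈ Set.Icc a b, |(ψ t - ψ a) ^ μ * f t| ≤ K) →
          ∀ x ∈ Set.Icc a b, |psiInt a α ψ f x| ≤ C * K) :=
  stmt9_general a b α μ ψ hab hα hμ1 hμα hψ hmono
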